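/- Let $z_1, z_2, z_3, z_4, z_5$ be nonzero complex numbers with $|z_1| \geq |z_2| \geq |z_3| \geq |z_4| \geq |z_5|$ and $z_i^{-1} = z_{6-i}$ for $1 \leq i \leq 5$. Then $\sum_{i=1}^5 |z_i| \leq 2\left|\sum_{i=1}^5 z_i^2\right|^{1/2} + 2\left|\sum_{i=1}^5 z_i\right| + 15$. -/

import Mathlib

/-!
Writing `a = ‖u‖`, `b = ‖v‖`, the identity `2uv = (u + v)² - (u² + v²)` gives
`2ab ≤ ‖u + v‖² + ‖u² + v²‖`, while `|a - b| ≤ ‖u + v‖`; hence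
`(a + b)² = (a - b)² + 4ab ≤ 3‖u + v‖² + 2‖u² + v²‖`, which bounds `a + b` by
`2‖u + v‖ + 2√‖u² + v²‖`. Since `z₃⁻¹ = z₃`, all of `z₃, z₄, z₅` lie in the unit disc,
so applying this to `u = z₁`, `v = z₂` only costs bounded error terms.
-/

lemma Real.sqrt_add_le_sqrt_add_sqrt {x y : ℝ} (hx : 0 ≤ x) (hy : 0 ≤ y) :
    √(x + y) ≤ √x + √y := by
  rw [Real.sqrt_le_left (by positivity), add_sq, Real.sq_sqrt hx, Real.sq_sqrt hy]
  nlinarith [Real.sqrt_nonneg x, Real.sqrt_nonneg y]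

lemma norm_le_one_of_inv_eq_self {𝕜 : Type*} [NormedDivisionRing 𝕜] {z : 𝕜}
    (h : z⁻¹ = z) : ‖z‖ ≤ 1 := by
  rcases eq_or_ne z 0 with rfl | hz
  · simp
  · have hsq : ‖z‖ * ‖z‖ = 1 := by
      simpa only [norm_mul, h, norm_one] using congrArg norm (inv_mul_cancel₀ hz)
    nlinarith [norm_nonneg z]

section RCLike

variable {𝕜 : Type*} [RCLike 𝕜]

lemma two_mul_norm_mul_norm_le (u v : 𝕜) :
    2 * (‖u‖ * ‖v‖) ≤ ‖u + v‖ ^ 2 + ‖u ^ 2 + v ^ 2‖ :=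
  calc 2 * (‖u‖ * ‖v‖) = ‖(u + v) ^ 2 - (u ^ 2 + v ^ 2)‖ := by
        rw [show (u + v) ^ 2 - (u ^ 2 + v ^ 2) = 2 * (u * v) by ring,
          norm_mul, norm_mul, RCLike.norm_two]
    _ ≤ ‖u + v‖ ^ 2 + ‖u ^ 2 + v ^ 2‖ := by
        rw [← norm_pow]; exact norm_sub_le _ _

lemma norm_add_norm_le_two_mul_norm_add_add_sqrt (u v : 𝕜) :
    ‖u‖ + ‖v‖ ≤ 2 * ‖u + v‖ + 2 * √‖u ^ 2 + v ^ 2‖ := by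
  have hdiff : |‖u‖ - ‖v‖| ≤ ‖u + v‖ := by
    simpa only [norm_neg, sub_neg_eq_add] using abs_norm_sub_norm_le u (-v)
  have hsq : (‖u‖ + ‖v‖) ^ 2 ≤ (2 * ‖u + v‖ + 2 * √‖u ^ 2 + v ^ 2‖) ^ 2 :=
    calc (‖u‖ + ‖v‖) ^ 2 = |‖u‖ - ‖v‖| ^ 2 + 2 * (2 * (‖u‖ * ‖v‖)) := by
          rw [sq_abs]; ring
      _ ≤ ‖u + v‖ ^ 2 + 2 * (‖u + v‖ ^ 2 + √‖u ^ 2 + v ^ 2‖ ^ 2) := by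
          rw [Real.sq_sqrt (norm_nonneg _)]
          gcongr
          exact two_mul_norm_mul_norm_le u v
      _ ≤ (2 * ‖u + v‖ + 2 * √‖u ^ 2 + v ^ 2‖) ^ 2 := by
          nlinarith [norm_nonneg (u + v), Real.sqrt_nonneg ‖u ^ 2 + v ^ 2‖]
  exact (pow_le_pow_iff_left₀ (by positivity) (by positivity) two_ne_zero).mp hsq

lemma norm_add_norm_le_of_perturbation (u v p q : 𝕜) :
    ‖u‖ + ‖v‖ ≤ 2 * ‖u + v + p‖ + 2 * √‖u ^ 2 + v ^ 2 + q‖ + 2 * ‖p‖ + 2 * √‖q‖ := by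
  have hsqrt : √‖u ^ 2 + v ^ 2‖ ≤ √‖u ^ 2 + v ^ 2 + q‖ + √‖q‖ :=
    (Real.sqrt_le_sqrt (norm_le_add_norm_add _ q)).trans
      (Real.sqrt_add_le_sqrt_add_sqrt (norm_nonneg _) (norm_nonneg _))
  linarith [norm_add_norm_le_two_mul_norm_add_add_sqrt u v, norm_le_add_norm_add (u + v) p]

end RCLike

theorem stmt_2_general (z1 z2 z3 z4 z5 : ℂ)
    (ho3 : ‖z4‖ ≤ ‖z3‖)
    (ho4 : ‖z5‖ ≤ ‖z4‖)
    (hi3 : z3⁻¹ = z3) :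
    ‖z1‖ + ‖z2‖ + ‖z3‖ + ‖z4‖ + ‖z5‖ ≤
      2 * Real.sqrt (‖z1 ^ 2 + z2 ^ 2 + z3 ^ 2 + z4 ^ 2 + z5 ^ 2‖) +
        2 * ‖z1 + z2 + z3 + z4 + z5‖ + 15 := by
  have h3 : ‖z3‖ ≤ 1 := norm_le_one_of_inv_eq_self hi3
  have h4 : ‖z4‖ ≤ 1 := ho3.trans h3
  have h5 : ‖z5‖ ≤ 1 := ho4.trans h4
  have hp : ‖z3 + z4 + z5‖ ≤ 3 := norm_add₃_le.trans (by linarith)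
  have hq : √‖z3 ^ 2 + z4 ^ 2 + z5 ^ 2‖ ≤ 2 := by
    rw [Real.sqrt_le_left zero_le_two]
    refine norm_add₃_le.trans ?_
    simp only [norm_pow]
    linarith [pow_le_one₀ (n := 2) (norm_nonneg z3) h3, pow_le_one₀ (n := 2) (norm_nonneg z4) h4,
      pow_le_one₀ (n := 2) (norm_nonneg z5) h5]
  have hmain := norm_add_norm_le_of_perturbation z1 z2 (z3 + z4 + z5) (z3 ^ 2 + z4 ^ 2 + z5 ^ 2)
  simp only [← add_assoc] at hmain
  linarith

theorem stmt_2 (z1 z2 z3 z4 z5 : ℂ)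
    (h1 : z1 ≠ 0) (h2 : z2 ≠ 0) (h3 : z3 ≠ 0) (h4 : z4 ≠ 0) (h5 : z5 ≠ 0)
    (ho1 : ‖z2‖ ≤ ‖z1‖)
    (ho2 : ‖z3‖ ≤ ‖z2‖)
    (ho3 : ‖z4‖ ≤ ‖z3‖)
    (ho4 : ‖z5‖ ≤ ‖z4‖)
    (hi1 : z1⁻¹ = z5) (hi2 : z2⁻¹ = z4) (hi3 : z3⁻¹ = z3) :
    ‖z1‖ + ‖z2‖ + ‖z3‖ + ‖z4‖ + ‖z5‖ ≤
      2 * Real.sqrt (‖z1 ^ 2 + z2 ^ 2 + z3 ^ 2 + z4 ^ 2 + z5 ^ 2‖) +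
        2 * ‖z1 + z2 + z3 + z4 + z5‖ + 15 :=
  stmt_2_general z1 z2 z3 z4 z5 ho3 ho4 hi3
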